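/- arXiv:1903.10592 — 3 statements merged into one kernel-verified Lean document; each statement's English description precedes it below -/
import Mathlib

section
/- Let T be a tree with at most l ≥ 2 leaves, and suppose Y is a subset of the vertices of T with the property that every edge of T has exactly one endpoint in Y. Then the number of edges of T is at most 2|Y| + l - 2. -/
/-! Every edge has exactly one endpoint in `X = Yᶜ`, so `|T|` is the degree sum over `X`.
A vertex of a tree with at least two vertices has degree at least `2` unless it is a leaf,
so `|T| ≥ 2|X| - l`; combined with `|X| + |Y| = |T| + 1` this is the bound. -/

open Finset

namespace SimpleGraph

variable {V : Type*} {G : SimpleGraph V}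

theorem isBipartiteWith_compl_of_adj {s : Set V} (h : ∀ v w, G.Adj v w → (v ∈ s ↔ w ∉ s)) :
    G.IsBipartiteWith s sᶜ where
  disjoint := disjoint_compl_right
  mem_of_adj v w hvw := by
    by_cases hv : v ∈ s
    · exact .inl ⟨hv, (h v w hvw).mp hv⟩
    · exact .inr ⟨hv, by simpa using mt (h v w hvw).mpr hv⟩

variable [Fintype V] [DecidableRel G.Adj]

theorem two_mul_card_le_sum_degree_add_card_leaves {S : Finset V}
    (hpos : ∀ v ∈ S, 0 < G.degree v) :
    2 * #S ≤ ∑ v ∈ S, G.degree v + #{v | G.degree v = 1} := by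
  have hleaves : ∑ v ∈ S, (if G.degree v = 1 then 1 else 0) ≤ #{v | G.degree v = 1} := by
    rw [← card_filter]
    exact card_le_card (filter_subset_filter _ (subset_univ S))
  calc 2 * #S = ∑ _v ∈ S, 2 := by rw [sum_const, smul_eq_mul, mul_comm]
    _ ≤ ∑ v ∈ S, (G.degree v + if G.degree v = 1 then 1 else 0) :=
      sum_le_sum fun v hv => by have := hpos v hv; split <;> omega
    _ ≤ ∑ v ∈ S, G.degree v + #{v | G.degree v = 1} := by
      rw [sum_add_distrib]; gcongr

end SimpleGraph

open SimpleGraph in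
theorem stmt_0_general {V : Type} [Fintype V] (G : SimpleGraph V)
    [DecidableRel G.Adj] (hT : G.IsTree) (l : ℕ)
    (hleaves : (Finset.univ.filter fun v => G.degree v = 1).card ≤ l)
    (Y : Finset V)
    (hY : ∀ v w : V, G.Adj v w → (v ∈ Y ↔ w ∉ Y)) :
    G.edgeFinset.card ≤ 2 * Y.card + l - 2 := by
  classical
  have hedges := hT.card_edgeFinset
  have hsplit := Y.card_add_card_compl
  rcases subsingleton_or_nontrivial V with hV | hV
  · have := Fintype.card_le_one_iff_subsingleton.mpr hV
    omega
  have hsum : ∑ v ∈ Yᶜ, G.degree v = #G.edgeFinset :=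
    isBipartiteWith_sum_degrees_eq_card_edges' (s := Y) <| by
      simpa using isBipartiteWith_compl_of_adj (s := (Y : Set V)) hY
  have hcount := two_mul_card_le_sum_degree_add_card_leaves (S := Yᶜ) fun v _ =>
    hT.connected.preconnected.degree_pos_of_nontrivial v
  omega

/-- If a tree `G` has at most `l ≥ 2` leaves and `Y` is a set of vertices
such that every edge has exactly one endpoint in `Y`, then `|T| ≤ 2|Y| + l - 2`. -/
theorem stmt_0 {V : Type} [Fintype V] [DecidableEq V] (G : SimpleGraph V)
    [DecidableRel G.Adj] (hT : G.IsTree) (l : ℕ) (hl : 2 ≤ l)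
    (hleaves : (Finset.univ.filter fun v => G.degree v = 1).card ≤ l)
    (Y : Finset V)
    (hY : ∀ v w : V, G.Adj v w → (v ∈ Y ↔ w ∉ Y)) :
    G.edgeFinset.card ≤ 2 * Y.card + l - 2 :=
  stmt_0_general G hT l hleaves Y hY
end

section
/- Let T be a tree with d edges and let M = P_T be the principal projective module over the opposite tree-contraction category, over a field k. Then for every tree T', dim_k P_T(T') ≤ |Aut(T)| · C(|T'|, d), where P_T(T') is the free vector space on the set of contractions from T' to T. -/
/-! A contraction `f : T' → T` of trees is recovered, up to an automorphism of `T`, from its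
set of crossing edges (the edges of `T'` it does not collapse): the fibres of `f` are the
components of `T'` with those edges deleted, and two contractions with the same fibres differ
by an automorphism of `T`. Since every edge of a tree is a bridge, `f` maps its crossing edges
bijectively onto the edges of `T`, so there are exactly `d` of them. Hence each of the
`C(|T'|, d)` sets of `d` edges of `T'` is the crossing set of at most `|Aut(T)|` contractions. -/

/-- A contraction of graphs, encoded by its vertex map: a surjection taking edges to
edges or vertices, hitting every edge of the target, with connected fibers. -/
def IsContraction {V V' : Type} (G : SimpleGraph V) (G' : SimpleGraph V')
    (f : V → V') : Prop :=
  Function.Surjective f ∧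
  (∀ v w : V, G.Adj v w → f v = f w ∨ G'.Adj (f v) (f w)) ∧
  (∀ a b : V', G'.Adj a b → ∃ v w : V, G.Adj v w ∧ f v = a ∧ f w = b) ∧
  (∀ v' : V', (G.induce (f ⁻¹' {v'})).Connected)

open Finset

namespace SimpleGraph

variable {V V' : Type} {G' : SimpleGraph V'} [Fintype V'] [DecidableRel G'.Adj] [DecidableEq V]
  {f : V' → V}

variable (G') in
def crossingEdges (f : V' → V) : Finset (Sym2 V') :=
  {e ∈ G'.edgeFinset | ¬ (e.map f).IsDiag}

lemma mk_mem_crossingEdges {v w : V'} :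
    s(v, w) ∈ G'.crossingEdges f ↔ G'.Adj v w ∧ f v ≠ f w := by
  simp [crossingEdges]

lemma deleteEdges_crossingEdges_adj {v w : V'} :
    (G'.deleteEdges (G'.crossingEdges f)).Adj v w ↔ G'.Adj v w ∧ f v = f w := by
  rw [deleteEdges_adj, Finset.mem_coe, mk_mem_crossingEdges]
  tauto

end SimpleGraph

open SimpleGraph

namespace IsContraction

variable {V V' : Type} {G : SimpleGraph V} {G' : SimpleGraph V'} {f g : V' → V}

lemma adj_apply_of_comp_eq (hf : IsContraction G' G f) (hg : IsContraction G' G g)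
    {σ : V → V} (hσ : σ.Injective) (hσgf : σ ∘ g = f) {a b : V} (hab : G.Adj a b) :
    G.Adj (σ a) (σ b) := by
  obtain ⟨v, w, hvw, rfl, rfl⟩ := hg.2.2.1 a b hab
  have hne : f v ≠ f w := by
    rw [← hσgf]
    exact hσ.ne hab.ne
  simpa [← hσgf] using (hf.2.1 v w hvw).resolve_left hne

lemma exists_iso_comp_eq (hf : IsContraction G' G f) (hg : IsContraction G' G g)
    (hfg : ∀ v w, f v = f w ↔ g v = g w) : ∃ σ : G ≃g G, σ ∘ g = f := by
  have hσg : ∀ v, f (Function.surjInv hg.1 (g v)) = f v := fun v =>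
    (hfg _ _).2 (Function.surjInv_eq hg.1 _)
  let σ₀ : V → V := f ∘ Function.surjInv hg.1
  have hσ₀g : σ₀ ∘ g = f := funext hσg
  have hbij : σ₀.Bijective := by
    refine ⟨fun a b hab => ?_, fun a => ?_⟩
    · obtain ⟨v, rfl⟩ := hg.1 a
      obtain ⟨w, rfl⟩ := hg.1 b
      exact (hfg v w).1 (by simpa [σ₀, hσg] using hab)
    · obtain ⟨v, rfl⟩ := hf.1 a
      exact ⟨g v, hσg v⟩
  let σ := Equiv.ofBijective σ₀ hbij
  have hσf : σ.symm ∘ f = g := by rw [← hσ₀g]; ext; simp [σ]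
  refine ⟨⟨σ, fun {a b} => ⟨fun hab => ?_, adj_apply_of_comp_eq hf hg hbij.1 hσ₀g⟩⟩, hσ₀g⟩
  simpa using adj_apply_of_comp_eq hg hf σ.symm.injective hσf hab

section crossingEdges

variable [Fintype V'] [DecidableRel G'.Adj] [DecidableEq V]

lemma eq_iff_reachable (hf : IsContraction G' G f) {v w : V'} :
    f v = f w ↔ (G'.deleteEdges (G'.crossingEdges f)).Reachable v w := by
  constructor
  · intro hvw
    let incl : G'.induce (f ⁻¹' {f v}) →g G'.deleteEdges (G'.crossingEdges f) :=
      { toFun := Subtype.val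
        map_rel' := fun {a b} hab =>
          deleteEdges_crossingEdges_adj.2 ⟨hab, a.2.trans b.2.symm⟩ }
    exact ((hf.2.2.2 (f v)).preconnected ⟨v, rfl⟩ ⟨w, hvw.symm⟩).map incl
  · rintro ⟨p⟩
    induction p with
    | nil => rfl
    | cons h _ ih => exact (deleteEdges_crossingEdges_adj.1 h).2.trans ih

lemma eq_iff_eq_of_crossingEdges_eq (hf : IsContraction G' G f) (hg : IsContraction G' G g)
    (hfg : G'.crossingEdges f = G'.crossingEdges g) (v w : V') : f v = f w ↔ g v = g w := by
  rw [hf.eq_iff_reachable, hg.eq_iff_reachable, hfg]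

lemma crossing_edge_eq_of_map_eq (hG' : G'.IsAcyclic) (hf : IsContraction G' G f)
    {v w x y : V'} (hvw : G'.Adj v w) (hxy : G'.Adj x y) (hvx : f v = f x) (hwy : f w = f y)
    (hfvw : f v ≠ f w) : s(v, w) = s(x, y) := by
  by_contra hne
  have hle : G'.deleteEdges (G'.crossingEdges f) ≤ G'.deleteEdges {s(v, w)} :=
    deleteEdges_anti (by simpa using mk_mem_crossingEdges.2 ⟨hvw, hfvw⟩)
  have hxy' : (G'.deleteEdges {s(v, w)}).Adj x y :=
    deleteEdges_adj.2 ⟨hxy, fun h => hne (Set.mem_singleton_iff.1 h).symm⟩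
  refine isBridge_iff.1 (isAcyclic_iff_forall_isBridge.1 hG' (G'.mem_edgeSet.2 hvw)) ?_
  exact ((hf.eq_iff_reachable.1 hvx).mono hle).trans
    (hxy'.reachable.trans ((hf.eq_iff_reachable.1 hwy.symm).mono hle))

lemma card_crossingEdges [Fintype V] [DecidableRel G.Adj] (hG' : G'.IsAcyclic)
    (hf : IsContraction G' G f) : #(G'.crossingEdges f) = #G.edgeFinset := by
  refine Finset.card_bij (fun e _ => e.map f) ?_ ?_ ?_
  · rintro ⟨v, w⟩ he
    obtain ⟨hvw, hne⟩ := mk_mem_crossingEdges.1 he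
    simpa using (hf.2.1 v w hvw).resolve_left hne
  · rintro ⟨v, w⟩ he ⟨x, y⟩ he' hvwxy
    obtain ⟨hvw, hne⟩ := mk_mem_crossingEdges.1 he
    obtain ⟨hxy, -⟩ := mk_mem_crossingEdges.1 he'
    rcases Sym2.eq_iff.1 (by simpa using hvwxy) with ⟨hvx, hwy⟩ | ⟨hvy, hwx⟩
    · exact crossing_edge_eq_of_map_eq hG' hf hvw hxy hvx hwy hne
    · exact (crossing_edge_eq_of_map_eq hG' hf hvw hxy.symm hvy hwx hne).trans Sym2.eq_swap
  · rintro ⟨a, b⟩ hab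
    obtain ⟨v, w, hvw, rfl, rfl⟩ := hf.2.2.1 a b (mem_edgeFinset.1 hab)
    exact ⟨s(v, w), mk_mem_crossingEdges.2 ⟨hvw, (mem_edgeFinset.1 hab).ne⟩, rfl⟩

lemma ncard_setOf_crossingEdges_eq_le [Finite V] (E : Finset (Sym2 V')) :
    {f | IsContraction G' G f ∧ G'.crossingEdges f = E}.ncard ≤ Nat.card (G ≃g G) := by
  rcases Set.eq_empty_or_nonempty {f | IsContraction G' G f ∧ G'.crossingEdges f = E} with
    hempty | ⟨g, hg, hgE⟩
  · simp [hempty]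
  have : Finite (G ≃g G) := .of_injective _ DFunLike.coe_injective
  have hsub : {f | IsContraction G' G f ∧ G'.crossingEdges f = E} ⊆
      Set.range fun σ : G ≃g G => ⇑σ ∘ g := fun f ⟨hf, hfE⟩ =>
    hf.exists_iso_comp_eq hg (hf.eq_iff_eq_of_crossingEdges_eq hg (hfE.trans hgE.symm))
  exact (Set.ncard_le_ncard hsub).trans (Finite.card_range_le _)

end crossingEdges

end IsContraction

theorem stmt_16_general {k : Type} [Field k] {V V' : Type} [Fintype V] [Fintype V']
    (G : SimpleGraph V) (G' : SimpleGraph V')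
    [DecidableRel G.Adj] [DecidableRel G'.Adj]
    (hG' : G'.IsTree) (d : ℕ) (hd : G.edgeFinset.card = d) :
    Module.finrank k ({f : V' → V // IsContraction G' G f} →₀ k) ≤
      Nat.card (G ≃g G) * (G'.edgeFinset.card).choose d := by
  classical
  have hcrossing : ∀ f, IsContraction G' G f →
      G'.crossingEdges f ∈ G'.edgeFinset.powersetCard d := fun f hf =>
    mem_powersetCard.2 ⟨filter_subset _ _, by rw [hf.card_crossingEdges hG'.isAcyclic, hd]⟩
  rw [Module.finrank_finsupp_self, Fintype.card_subtype, ← card_powersetCard]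
  refine card_le_mul_card_image_of_maps_to (fun f hf => hcrossing f (mem_filter.1 hf).2) _
    fun E _ => ?_
  rw [filter_filter, ← Set.ncard_coe_finset]
  simpa using IsContraction.ncard_setOf_crossingEdges_eq_le E

/-- For trees `T` (with `d` edges) and `T'`, the dimension over a field
`k` of the principal projective `P_T(T')`, i.e. the free `k`-vector space on the set of
contractions `T' → T`, is at most `|Aut(T)| · C(|T'|, d)`. -/
theorem stmt_16 {k : Type} [Field k] {V V' : Type} [Fintype V] [Fintype V']
    (G : SimpleGraph V) (G' : SimpleGraph V')
    [DecidableRel G.Adj] [DecidableRel G'.Adj]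
    (hG : G.IsTree) (hG' : G'.IsTree) (d : ℕ) (hd : G.edgeFinset.card = d) :
    Module.finrank k ({f : V' → V // IsContraction G' G f} →₀ k) ≤
      Nat.card (G ≃g G) * (G'.edgeFinset.card).choose d :=
  stmt_16_general G G' hG' d hd
end

section
/- For a tree T with at most l leaves and a flat of cone(T) encoded by a triple (R, W, U) where R is a tree, U partitions T into subtrees indexed by vertices of R with adjacency pattern R, and W ⊆ V(R) is a subset meeting every edge of R: then |R| + |R_W| ≤ 2|W| + l - 2, where R_W is the induced forest on the vertex set W. -/
/-!
Each fibre of `π` is a subtree of the tree `T` (here `G`), so exactly `|V(R)| - 1 = |R|` edges of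
`T` join distinct fibres. Every edge of `R` is realised by at least one of them, hence by exactly
one. The degrees in `T` over the fibre of a leaf of `R` then sum to `2 |fibre| - 1`, so that fibre
contains a leaf of `T`, and `R` has at most `l` leaves.

In `R`, the complement of `W` is independent, so the edges of `R` not in `R_W` are counted by the
degrees of the vertices outside `W`, which are at least `2` except at leaves. Together with
`|R| = |V(R)| - 1` this gives `|R| + |R_W| + 2 ≤ 2 |W| + #leaves(R)`.
-/

open Finset

namespace SimpleGraph

lemma IsAcyclic.sum_card_neighborFinset_filter_add_two {V : Type*} [Fintype V] [DecidableEq V]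
    {G : SimpleGraph V} [DecidableRel G.Adj] (hG : G.IsAcyclic) {s : Finset V}
    (hs : (G.induce (s : Set V)).Connected) :
    ∑ u ∈ s, #{v ∈ G.neighborFinset u | v ∈ s} + 2 = 2 * #s := by
  have htree : (G.induce (s : Set V)).IsTree := ⟨hs, hG.induce _⟩
  have hdeg (u : (s : Set V)) :
      (G.induce (s : Set V)).degree u = #{v ∈ G.neighborFinset u | v ∈ s} := by
    have := congrArg card (map_neighborFinset_induce (G := G) u)
    rw [card_map, card_neighborFinset_eq_degree, toFinset_coe, ← filter_mem_eq_inter] at this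
    convert this
  have hsum := (G.induce (s : Set V)).sum_degrees_eq_twice_card_edges
  have hcard := htree.card_edgeFinset
  have hs : Fintype.card (s : Set V) = #s := by simp
  rw [Finset.sum_congr rfl (fun u _ => hdeg u), ← Finset.sum_subtype s (fun _ => mem_coe.symm)
    (fun u => #{v ∈ G.neighborFinset u | v ∈ s})] at hsum
  omega

section Quotient

variable {V VR : Type*} [Fintype V] [DecidableEq VR]
  {G : SimpleGraph V} [DecidableRel G.Adj] {R : SimpleGraph VR} [DecidableRel R.Adj] (π : V → VR)

variable (G) in
def fiberAdjCount (a b : VR) : ℕ :=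
  ∑ u with π u = a, #{v ∈ G.neighborFinset u | π v = b}

lemma fiberAdjCount_pos_iff {a b : VR} :
    0 < fiberAdjCount G π a b ↔ ∃ v w, G.Adj v w ∧ π v = a ∧ π w = b := by
  simp only [fiberAdjCount, sum_pos_iff, card_pos, filter_nonempty_iff, mem_filter, mem_univ,
    true_and, mem_neighborFinset]
  exact ⟨fun ⟨v, hv, w, hw, hwb⟩ => ⟨v, w, hw, hv, hwb⟩,
    fun ⟨v, w, h, hv, hw⟩ => ⟨v, hv, w, h, hw⟩⟩

lemma fiberAdjCount_self_add_two [DecidableEq V] (hG : G.IsAcyclic) (a : VR)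
    (ha : (G.induce (π ⁻¹' {a})).Connected) :
    fiberAdjCount G π a a + 2 = 2 * #{u | π u = a} := by
  have hfib : (({u | π u = a} : Finset V) : Set V) = π ⁻¹' {a} := by ext; simp
  rw [← hfib] at ha
  rw [← hG.sum_card_neighborFinset_filter_add_two ha, fiberAdjCount]
  congr 2 with u
  congr 1 with v
  simp

variable [Fintype VR]

lemma sum_fiberAdjCount (a : VR) : ∑ b, fiberAdjCount G π a b = ∑ u with π u = a, G.degree u := by
  simp only [fiberAdjCount]
  rw [sum_comm]
  refine sum_congr rfl fun u _ => ?_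
  rw [← card_neighborFinset_eq_degree, card_eq_sum_card_fiberwise (f := π) (fun _ _ => mem_univ _)]

lemma sum_fiberAdjCount_eq_add_sum_neighborFinset
    (hadj : ∀ a b, a ≠ b → (R.Adj a b ↔ ∃ v w, G.Adj v w ∧ π v = a ∧ π w = b)) (a : VR) :
    ∑ b, fiberAdjCount G π a b =
      fiberAdjCount G π a a + ∑ b ∈ R.neighborFinset a, fiberAdjCount G π a b := by
  rw [← sum_insert (R.notMem_neighborFinset_self a)]
  refine (sum_subset (subset_univ _) fun b _ hb => ?_).symm
  rw [mem_insert, mem_neighborFinset, not_or] at hb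
  by_contra hpos
  exact hb.2 ((hadj a b (Ne.symm hb.1)).2 ((fiberAdjCount_pos_iff π).1 (Nat.pos_of_ne_zero hpos)))

lemma fiberAdjCount_eq_one_of_adj [DecidableEq V] (hG : G.IsTree) (hR : R.IsTree)
    (hfib : ∀ a, (G.induce (π ⁻¹' {a})).Connected)
    (hadj : ∀ a b, a ≠ b → (R.Adj a b ↔ ∃ v w, G.Adj v w ∧ π v = a ∧ π w = b))
    {a b : VR} (hab : R.Adj a b) : fiberAdjCount G π a b = 1 := by
  -- Both sides of `hoff` equal `2 |V(R)| - 2`, and termwise `1 ≤ fiberAdjCount`.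
  have htotal : ∑ a, ∑ b, fiberAdjCount G π a b + 2 = 2 * Fintype.card V := by
    simp only [sum_fiberAdjCount, sum_fiberwise, sum_degrees_eq_twice_card_edges]
    have := hG.card_edgeFinset
    omega
  have hdiag : ∑ a, fiberAdjCount G π a a + 2 * Fintype.card VR = 2 * Fintype.card V := by
    have := card_eq_sum_card_fiberwise (f := π) (s := univ) (t := univ) fun _ _ => mem_univ _
    simp only [card_univ] at this
    rw [this, mul_sum,
      ← sum_congr rfl fun a _ => fiberAdjCount_self_add_two π hG.isAcyclic a (hfib a),
      sum_add_distrib, sum_const, card_univ, smul_eq_mul, mul_comm]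
  have hdegR : ∑ a, ∑ b ∈ R.neighborFinset a, 1 + 2 = 2 * Fintype.card VR := by
    simp only [sum_const, smul_eq_mul, mul_one, card_neighborFinset_eq_degree,
      sum_degrees_eq_twice_card_edges]
    have := hR.card_edgeFinset
    omega
  have hoff : ∑ a, ∑ b ∈ R.neighborFinset a, fiberAdjCount G π a b =
      ∑ a, ∑ b ∈ R.neighborFinset a, 1 := by
    simp only [sum_fiberAdjCount_eq_add_sum_neighborFinset π hadj, sum_add_distrib] at htotal
    omega
  have hpos (a : VR) : ∀ b ∈ R.neighborFinset a, 1 ≤ fiberAdjCount G π a b := fun b hb =>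
    (fiberAdjCount_pos_iff π).2 ((hadj a b (R.ne_of_adj ((mem_neighborFinset _ _ _).1 hb))).1
      ((mem_neighborFinset _ _ _).1 hb))
  rw [eq_comm, sum_eq_sum_iff_of_le fun a _ => sum_le_sum (hpos a)] at hoff
  exact ((sum_eq_sum_iff_of_le (hpos a)).1 (hoff a (mem_univ a)) b
    ((mem_neighborFinset _ _ _).2 hab)).symm

lemma exists_degree_eq_one_of_degree_eq_one [DecidableEq V] (hG : G.IsTree) (hR : R.IsTree)
    (hfib : ∀ a, (G.induce (π ⁻¹' {a})).Connected)
    (hadj : ∀ a b, a ≠ b → (R.Adj a b ↔ ∃ v w, G.Adj v w ∧ π v = a ∧ π w = b))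
    {a : VR} (ha : R.degree a = 1) : ∃ u, π u = a ∧ G.degree u = 1 := by
  obtain ⟨b, hab⟩ := (R.degree_pos_iff_exists_adj a).1 (by omega)
  have : Nontrivial V := by
    obtain ⟨v, w, hvw, -⟩ := (hadj a b hab.ne).1 hab
    exact ⟨v, w, hvw.ne⟩
  have hsum : ∑ u with π u = a, G.degree u + 1 = 2 * #{u | π u = a} := by
    rw [← sum_fiberAdjCount, sum_fiberAdjCount_eq_add_sum_neighborFinset π hadj,
      sum_congr rfl fun b hb => fiberAdjCount_eq_one_of_adj π hG hR hfib hadj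
        ((mem_neighborFinset _ _ _).1 hb),
      sum_const, card_neighborFinset_eq_degree, ha, smul_eq_mul, mul_one,
      ← fiberAdjCount_self_add_two π hG.isAcyclic a (hfib a)]
  by_contra! hleaf
  have hdeg : 2 * #{u | π u = a} ≤ ∑ u with π u = a, G.degree u := by
    rw [mul_comm, ← smul_eq_mul, ← sum_const]
    refine sum_le_sum fun u hu => ?_
    have := hG.connected.preconnected.degree_pos_of_nontrivial u
    have := hleaf u (mem_filter.1 hu).2
    omega
  omega

lemma card_filter_degree_eq_one_le [DecidableEq V] (hG : G.IsTree) (hR : R.IsTree)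
    (hfib : ∀ a, (G.induce (π ⁻¹' {a})).Connected)
    (hadj : ∀ a b, a ≠ b → (R.Adj a b ↔ ∃ v w, G.Adj v w ∧ π v = a ∧ π w = b)) :
    #{a | R.degree a = 1} ≤ #{u | G.degree u = 1} :=
  calc #{a | R.degree a = 1}
    _ ≤ #(image π {u | G.degree u = 1}) := card_le_card fun a ha => by
        obtain ⟨u, rfl, hu⟩ :=
          exists_degree_eq_one_of_degree_eq_one π hG hR hfib hadj (mem_filter.1 ha).2
        exact mem_image_of_mem π (mem_filter.2 ⟨mem_univ u, hu⟩)
    _ ≤ #{u | G.degree u = 1} := card_image_le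

end Quotient

section VertexCover

variable {VR : Type*} [Fintype VR] {R : SimpleGraph VR} [DecidableRel R.Adj]

lemma two_mul_card_le_sum_degree_add_card_filter (hpos : ∀ a, 0 < R.degree a) (A : Finset VR) :
    2 * #A ≤ ∑ a ∈ A, R.degree a + #{a ∈ A | R.degree a = 1} := by
  rw [card_filter, ← sum_add_distrib, mul_comm, ← smul_eq_mul, ← sum_const]
  refine sum_le_sum fun a _ => ?_
  have := hpos a
  split_ifs <;> omega

variable [DecidableEq VR]

lemma sum_degree_compl_add_card_filter_edgeFinset {W : Finset VR}
    (hW : ∀ a b, R.Adj a b → a ∈ W ∨ b ∈ W) :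
    ∑ a ∈ Wᶜ, R.degree a + #{e ∈ R.edgeFinset | ∀ x ∈ e, x ∈ W} = #R.edgeFinset := by
  have hdisj : ((Wᶜ : Finset VR) : Set VR).PairwiseDisjoint fun a => R.incidenceFinset a := by
    intro a ha b hb hab
    refine Finset.disjoint_left.2 fun e hea heb => ?_
    rw [mem_incidenceFinset] at hea heb
    have hadj : R.Adj a b := by
      rw [← mem_edgeSet, ← (Sym2.mem_and_mem_iff hab).1 ⟨hea.2, heb.2⟩]
      exact hea.1
    simp only [coe_compl, Set.mem_compl_iff, mem_coe] at ha hb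
    exact (hW a b hadj).elim ha hb
  have hunion : Wᶜ.biUnion (fun a => R.incidenceFinset a) =
      {e ∈ R.edgeFinset | ¬ ∀ x ∈ e, x ∈ W} := by
    ext e
    simp only [mem_biUnion, mem_compl, mem_incidenceFinset, mem_filter, mem_edgeFinset,
      not_forall, exists_prop]
    exact ⟨fun ⟨a, ha, he, hae⟩ => ⟨he, a, hae, ha⟩, fun ⟨he, a, hae, ha⟩ => ⟨a, ha, he, hae⟩⟩
  rw [← sum_congr rfl fun a _ => R.card_incidenceFinset_eq_degree a, ← card_biUnion hdisj, hunion,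
    add_comm]
  exact card_filter_add_card_filter_not _

lemma IsTree.card_edgeFinset_add_card_filter_add_two_le [Nontrivial VR] (hR : R.IsTree)
    {W : Finset VR} (hW : ∀ a b, R.Adj a b → a ∈ W ∨ b ∈ W) :
    #R.edgeFinset + #{e ∈ R.edgeFinset | ∀ x ∈ e, x ∈ W} + 2 ≤
      2 * #W + #{a | R.degree a = 1} := by
  have hcover := sum_degree_compl_add_card_filter_edgeFinset hW
  have hcompl := two_mul_card_le_sum_degree_add_card_filter
    (fun a => hR.connected.preconnected.degree_pos_of_nontrivial a) Wᶜ
  have hleaves : #{a ∈ Wᶜ | R.degree a = 1} ≤ #{a | R.degree a = 1} :=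
    card_le_card (filter_subset_filter _ (subset_univ _))
  have hcard := hR.card_edgeFinset
  have hWcard := card_add_card_compl W
  omega

end VertexCover

end SimpleGraph

open Classical in
theorem stmt_19_general {V VR : Type} [Fintype V] [Fintype VR]
    (G : SimpleGraph V) (R : SimpleGraph VR)
    [DecidableRel G.Adj] [DecidableRel R.Adj]
    (hG : G.IsTree) (hR : R.IsTree) (l : ℕ) (hl : 2 ≤ l)
    (hleaves : (Finset.univ.filter fun v => G.degree v = 1).card ≤ l)
    (π : V → VR)
    (hfib : ∀ a : VR, (G.induce (π ⁻¹' {a})).Connected)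
    (hadj : ∀ a b : VR, a ≠ b →
      (R.Adj a b ↔ ∃ v w : V, G.Adj v w ∧ π v = a ∧ π w = b))
    (W : Finset VR) (hW : ∀ a b : VR, R.Adj a b → a ∈ W ∨ b ∈ W) :
    R.edgeFinset.card + (R.edgeFinset.filter fun e => ∀ x ∈ e, x ∈ W).card ≤
      2 * W.card + l - 2 := by
  have hcard := hR.card_edgeFinset
  have hfilter := card_filter_le R.edgeFinset fun e => ∀ x ∈ e, x ∈ W
  rcases subsingleton_or_nontrivial VR with hVR | hVR
  · have := Fintype.card_le_one_iff_subsingleton.2 hVR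
    omega
  · have hbound := hR.card_edgeFinset_add_card_filter_add_two_le hW
    have hleavesR := SimpleGraph.card_filter_degree_eq_one_le π hG hR hfib hadj
    omega

open Classical in
/-- Let `T` be a tree with at most `l ≥ 2` leaves, and let a flat of
`cone(T)` be encoded by a triple `(R, W, U)`: a tree `R`, a decomposition of `T` into
subtrees indexed by the vertices of `R` with adjacency pattern `R` (encoded by the map
`π : V(T) → V(R)` with connected fibers), and a groovy subset `W ⊆ V(R)` (meeting every
edge of `R`).  Then `|R| + |R_W| ≤ 2|W| + l - 2`, where `R_W` is the induced forest on
`W`. -/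
theorem stmt_19 {V VR : Type} [Fintype V] [Fintype VR] [DecidableEq V]
    (G : SimpleGraph V) (R : SimpleGraph VR)
    [DecidableRel G.Adj] [DecidableRel R.Adj]
    (hG : G.IsTree) (hR : R.IsTree) (l : ℕ) (hl : 2 ≤ l)
    (hleaves : (Finset.univ.filter fun v => G.degree v = 1).card ≤ l)
    (π : V → VR)
    (hfib : ∀ a : VR, (G.induce (π ⁻¹' {a})).Connected)
    (hadj : ∀ a b : VR, a ≠ b →
      (R.Adj a b ↔ ∃ v w : V, G.Adj v w ∧ π v = a ∧ π w = b))
    (W : Finset VR) (hW : ∀ a b : VR, R.Adj a b → a ∈ W ∨ b ∈ W) :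
    R.edgeFinset.card + (R.edgeFinset.filter fun e => ∀ x ∈ e, x ∈ W).card ≤
      2 * W.card + l - 2 :=
  stmt_19_general G R hG hR l hl hleaves π hfib hadj W hW
end
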